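/- arXiv:math/0203104 — 2 statements merged into one kernel-verified Lean document; each statement's English description precedes it below -/
import Mathlib

section
/- Let k ≥ 2 and let ω : Fin k → ℝ be any weight vector with ω₂ = 2ω₁ (the remaining components ω₃,…,ω_k arbitrary). Then for every string generator γ : Fin k → ℕ with γ₁ ∈ {0,1}, the ω-weighted string satisfies T_1(S_ω(γ)) = 0. -/
/-! For the Euler operator `E = Σ_j t_j ∂_j` one has `∂₂ (E P) = ∂₂ P + Σ_j t_j ∂₂ ∂_j P`, so
`T_m = ∂₁² − ∂₂ ∘ E + (1 − m) ∂₂`; since `E (t^d) = |d| t^d`, on a monomial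
`T_1 (c t^d) = ∂₁² (c t^d) − ∂₂ (|d| c t^d)`. Hence `T_1 S_ω(γ) = Σ_j (F_j − G_j)` with
`F_j = ∂₁² (A_j t^{γ^{(j)}})` and `G_j = ∂₂ (|γ^{(j)}| A_j t^{γ^{(j)}})`, and this sum telescopes:
`F_0 = 0` because `γ₁ ≤ 1`, `G_{γ₂} = 0` because `t₂` does not occur in the last monomial, and
`F_{j+1} = G_j` because `γ^{(j+1)} − 2e₁ = γ^{(j)} − e₂` while the coefficients match by the
recursion of the multinomial coefficients; here `ω₂ = 2ω₁` is exactly what keeps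
`Σ_i γ^{(j)}_i ω_i` constant along the string. -/

open MvPolynomial Finset

/-- The weight coefficient `A_ω(α)` of Theorem 2.1 (for `α ≠ 0`):
`A_ω(α) = multinomial(α) · (Σ α_i ω_i) / (Σ α_i)`. -/
noncomputable def Aw {k : ℕ} (ω : Fin k → ℝ) (α : Fin k → ℕ) : ℝ :=
  (Nat.multinomial Finset.univ α : ℝ) * (∑ i, (α i : ℝ) * ω i) / (∑ i, (α i : ℝ))

/-- The isobaric degree `Σ_{i=1}^k i·α_i` of an exponent vector. -/
def isoDeg {k : ℕ} (α : Fin k → ℕ) : ℕ := ∑ i, (i.1 + 1) * α i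

/-- The (finite) set of exponent vectors of isobaric degree `n`. -/
def wipIndex (k n : ℕ) : Finset (Fin k → ℕ) :=
  (Fintype.piFinset fun _ : Fin k => Finset.range (n + 1)).filter fun α => isoDeg α = n

/-- The weighted isobaric polynomial `P_{n,ω} = Σ_α A_ω(α)·t^α`. -/
noncomputable def WIP (k n : ℕ) (ω : Fin k → ℝ) : MvPolynomial (Fin k) ℝ :=
  ∑ α ∈ wipIndex k n, MvPolynomial.monomial (Finsupp.equivFunOnFinite.symm α) (Aw ω α)

/-- The operator `T_m(P) = D₁₁P − Σ_j t_j D_{2j}P − m·D₂P`. -/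
noncomputable def Tm (k : ℕ) (hk : 2 ≤ k) (m : ℝ) (P : MvPolynomial (Fin k) ℝ) :
    MvPolynomial (Fin k) ℝ :=
  pderiv (⟨0, by omega⟩ : Fin k) (pderiv (⟨0, by omega⟩ : Fin k) P)
    - ∑ j : Fin k, X j * pderiv (⟨1, by omega⟩ : Fin k) (pderiv j P)
    - C m * pderiv (⟨1, by omega⟩ : Fin k) P

/-- The `j`-th element `γ^{(j)}` of the string generated by `γ`. -/
def strElem (k : ℕ) (hk : 2 ≤ k) (γ : Fin k → ℕ) (j : ℕ) : Fin k → ℕ :=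
  fun i => if i = (⟨0, by omega⟩ : Fin k) then γ i + 2 * j
    else if i = (⟨1, by omega⟩ : Fin k) then γ i - j else γ i

/-- The `ω`-weighted string generated by `γ`:
`S_ω(γ) = Σ_{j=0}^{γ₂} A_ω(γ^{(j)})·t^{γ^{(j)}}`. -/
noncomputable def strPoly (k : ℕ) (hk : 2 ≤ k) (ω : Fin k → ℝ) (γ : Fin k → ℕ) :
    MvPolynomial (Fin k) ℝ :=
  ∑ j ∈ Finset.range (γ (⟨1, by omega⟩ : Fin k) + 1),
    MvPolynomial.monomial (Finsupp.equivFunOnFinite.symm (strElem k hk γ j))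
      (Aw ω (strElem k hk γ j))

namespace MvPolynomial

variable {σ R : Type*} [CommSemiring R]

theorem pderiv_sum_X_mul_pderiv [Fintype σ] (i : σ) (P : MvPolynomial σ R) :
    pderiv i (∑ j, X j * pderiv j P) = pderiv i P + ∑ j, X j * pderiv i (pderiv j P) := by
  classical
  simp only [map_sum, Derivation.leibniz, pderiv_X, smul_eq_mul, Finset.sum_add_distrib,
    Pi.single_apply, mul_ite, mul_one, mul_zero, Finset.sum_ite_eq', Finset.mem_univ, if_true]
  exact add_comm _ _

theorem sum_X_mul_pderiv_monomial [Fintype σ] (d : σ →₀ ℕ) (c : R) :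
    ∑ j, X j * pderiv j (monomial d c) = d.degree • monomial d c :=
  (isHomogeneous_monomial c rfl).sum_X_mul_pderiv

theorem pderiv_pderiv_monomial_eq_zero {i : σ} {d : σ →₀ ℕ} (hd : d i ≤ 1) (c : R) :
    pderiv i (pderiv i (monomial d c)) = 0 := by
  interval_cases h : d i <;> simp [pderiv_monomial, h]

theorem pderiv_pderiv_monomial_eq_pderiv_monomial {a b : σ} {f g : σ →₀ ℕ}
    (h : g + Finsupp.single b 1 = f + Finsupp.single a 2) {cf cg : R}
    (hc : cg * g a * (g a - 1 : ℕ) = cf * f b) :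
    pderiv a (pderiv a (monomial g cg)) = pderiv b (monomial f cf) := by
  classical
  have hexp : g - Finsupp.single a 1 - Finsupp.single a 1 = f - Finsupp.single b 1 := by
    ext i
    have hi := DFunLike.congr_fun h i
    simp only [Finsupp.add_apply, Finsupp.single_apply] at hi
    simp only [Finsupp.tsub_apply, Finsupp.single_apply]
    split_ifs at hi ⊢ <;> omega
  simp [pderiv_monomial, hexp, hc]

end MvPolynomial

theorem Finset.sum_range_succ_sub_eq_zero {M : Type*} [AddCommGroup M] {F G : ℕ → M} {n : ℕ}
    (h₀ : F 0 = 0) (hn : G n = 0) (h : ∀ j < n, F (j + 1) = G j) :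
    ∑ j ∈ range (n + 1), (F j - G j) = 0 := by
  rw [sum_sub_distrib, sum_range_succ', sum_range_succ, h₀, hn,
    sum_congr rfl fun j hj => h j (mem_range.1 hj)]
  abel

theorem Finset.prod_comp_add_single_mul {ι M : Type*} [Fintype ι] [DecidableEq ι] [CommMonoid M]
    (F : ℕ → M) (f : ι → ℕ) (a : ι) (n : ℕ) :
    (∏ i, F ((f + Pi.single a n : ι → ℕ) i)) * F (f a) = (∏ i, F (f i)) * F (f a + n) := by
  rw [← mul_prod_erase _ _ (mem_univ a), ← mul_prod_erase _ (fun i => F (f i)) (mem_univ a),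
    prod_congr rfl fun i hi => by rw [Pi.add_apply, Pi.single_eq_of_ne (ne_of_mem_erase hi),
      add_zero]]
  simp only [Pi.add_apply, Pi.single_eq_same]
  ac_rfl

open Nat in
theorem Nat.multinomial_mul_of_add_single {ι : Type*} [Fintype ι] [DecidableEq ι] {a b : ι}
    (hab : a ≠ b) {f g : ι → ℕ} (h : g + Pi.single b 1 = f + Pi.single a 2) :
    multinomial univ g * ((f a + 2) * (f a + 1))
      = multinomial univ f * (f b * (∑ i, f i + 1)) := by
  have hfb : f b = g b + 1 := by simpa [hab.symm] using (congrFun h b).symm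
  have hsum : ∑ i, g i = ∑ i, f i + 1 := by
    have := congrArg (fun v => ∑ i, v i) h
    simp only [Pi.add_apply, sum_add_distrib, sum_pi_single', mem_univ, if_true] at this
    omega
  have hfact : (∏ i, (g i)!) * f b = (∏ i, (f i)!) * ((f a + 2) * (f a + 1)) := by
    have hg := prod_comp_add_single_mul factorial g b 1
    have hf := prod_comp_add_single_mul factorial f a 2
    rw [h, factorial_succ] at hg
    rw [factorial_succ, factorial_succ] at hf
    apply Nat.eq_of_mul_eq_mul_right (mul_pos (factorial_pos (g b)) (factorial_pos (f a)))
    rw [hfb]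
    linear_combination (f a)! * hg.symm + (g b)! * hf
  have hspec_g := multinomial_spec univ g
  have hspec_f := multinomial_spec univ f
  rw [hsum, factorial_succ] at hspec_g
  apply Nat.eq_of_mul_eq_mul_left (mul_pos (prod_pos fun i _ => factorial_pos (g i))
    (show 0 < f b by omega))
  linear_combination (f b * ((f a + 2) * (f a + 1))) * hspec_g
    - (multinomial univ f * f b * (∑ i, f i + 1)) * hfact
    - ((f a + 2) * (f a + 1) * f b * (∑ i, f i + 1)) * hspec_f

theorem Aw_mul_of_add_single {k : ℕ} (ω : Fin k → ℝ) {a b : Fin k} (hab : a ≠ b)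
    (hω : ω b = 2 * ω a) {f g : Fin k → ℕ} (h : g + Pi.single b 1 = f + Pi.single a 2) :
    Aw ω g * g a * (g a - 1 : ℕ) = (∑ i, f i : ℕ) * Aw ω f * f b := by
  have hga : g a = f a + 2 := by simpa [hab] using congrFun h a
  have hfb : f b = g b + 1 := by simpa [hab.symm] using (congrFun h b).symm
  have hsum : ∑ i, (g i : ℝ) = ∑ i, (f i : ℝ) + 1 := by
    have := congrArg (fun v => ∑ i, (v i : ℝ)) h
    simp [sum_add_distrib, Pi.single_apply] at this
    linarith
  have hweight : ∑ i, (g i : ℝ) * ω i = ∑ i, (f i : ℝ) * ω i := by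
    have := congrArg (fun v => ∑ i, (v i : ℝ) * ω i) h
    simp [add_mul, sum_add_distrib, Pi.single_apply] at this
    linarith
  have hmult := congrArg (Nat.cast (R := ℝ)) (Nat.multinomial_mul_of_add_single hab h)
  have hpos : (0 : ℝ) < ∑ i, (f i : ℝ) :=
    sum_pos' (fun i _ => Nat.cast_nonneg _) ⟨b, mem_univ b, by rw [hfb]; positivity⟩
  rw [Aw, Aw, hsum, hweight, hga]
  push_cast at hmult ⊢
  field_simp
  linear_combination (∑ i, (f i : ℝ) * ω i) * hmult

section Strings

variable {k : ℕ} (hk : 2 ≤ k)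

theorem Tm_eq (m : ℝ) (P : MvPolynomial (Fin k) ℝ) :
    Tm k hk m P = pderiv ⟨0, by omega⟩ (pderiv ⟨0, by omega⟩ P)
      - pderiv ⟨1, by omega⟩ (∑ j, X j * pderiv j P) + C (1 - m) * pderiv ⟨1, by omega⟩ P := by
  rw [Tm, pderiv_sum_X_mul_pderiv, map_sub, map_one]
  ring

theorem Tm_sum (m : ℝ) {ι : Type*} (s : Finset ι) (P : ι → MvPolynomial (Fin k) ℝ) :
    Tm k hk m (∑ j ∈ s, P j) = ∑ j ∈ s, Tm k hk m (P j) := by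
  simp only [Tm, map_sum, mul_sum, sum_sub_distrib]
  rw [sum_comm]

theorem Tm_one_monomial (d : Fin k →₀ ℕ) (c : ℝ) :
    Tm k hk 1 (monomial d c) = pderiv ⟨0, by omega⟩ (pderiv ⟨0, by omega⟩ (monomial d c))
      - pderiv ⟨1, by omega⟩ (monomial d (d.degree * c)) := by
  rw [Tm_eq, sum_X_mul_pderiv_monomial, sub_self, map_zero, zero_mul, add_zero, smul_monomial,
    nsmul_eq_mul]

theorem strElem_succ_add_single {γ : Fin k → ℕ} {j : ℕ} (hj : j < γ ⟨1, by omega⟩) :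
    strElem k hk γ (j + 1) + Pi.single ⟨1, by omega⟩ 1
      = strElem k hk γ j + Pi.single ⟨0, by omega⟩ 2 := by
  funext i
  simp only [strElem, Pi.add_apply, Pi.single_apply]
  split_ifs <;> subst_vars <;> simp_all [Fin.ext_iff] <;> omega

end Strings

/-- For any weight vector `ω` with `ω₂ = 2ω₁` (remaining components arbitrary),
every `ω`-weighted string is annihilated by `T_1`. -/
theorem string_in_ker_T1_of_weight (k : ℕ) (hk : 2 ≤ k) (ω : Fin k → ℝ)
    (hω : ω (⟨1, by omega⟩ : Fin k) = 2 * ω (⟨0, by omega⟩ : Fin k))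
    (γ : Fin k → ℕ)
    (hγ : γ (⟨0, by omega⟩ : Fin k) = 0 ∨ γ (⟨0, by omega⟩ : Fin k) = 1) :
    Tm k hk 1 (strPoly k hk ω γ) = 0 := by
  rw [strPoly, Tm_sum]
  simp only [Tm_one_monomial]
  refine sum_range_succ_sub_eq_zero ?_ ?_ fun j hj => ?_
  · exact pderiv_pderiv_monomial_eq_zero (by simp [strElem]; omega) _
  · simp [pderiv_monomial, strElem, Fin.ext_iff]
  · apply pderiv_pderiv_monomial_eq_pderiv_monomial
    · ext i
      simpa [Finsupp.single_eq_pi_single] using congrFun (strElem_succ_add_single hk hj) i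
    · simpa [Finsupp.degree_eq_sum] using
        Aw_mul_of_add_single ω (by simp [Fin.ext_iff]) hω (strElem_succ_add_single hk hj)
end

section
/- Let k ≥ 2 and let ω : Fin k → ℝ be a weight vector. Then T_1(P_{n,ω}) = 0 for all n ≥ 1 if and only if ω₂ = 2ω₁. (The first two components of the weight vector completely determine the kernel of T_1 on the WIP-module.) -/
open MvPolynomial Finset

/-!
Compare coefficients. After commuting `∂₂` past `∂_j`, the sum `Σ_j t_j ∂_j` acts as Euler's
operator, so the coefficient of `t^β` in `T_m P` is
`(β₁+2)(β₁+1)·[t^{β+2e₁}]P − (|β|+m)(β₂+1)·[t^{β+e₂}]P`.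
For `P = P_{n,ω}` both exponents `β+2e₁` and `β+e₂` have isobaric degree `isoDeg β + 2`, and the
recurrence `multinomial(β+e_a)·(β_a+1) = (|β|+1)·multinomial(β)` collapses this coefficient to
`(2ω₁ − ω₂)(|β|+1)·multinomial(β)` when `isoDeg β + 2 = n` (and to `0` otherwise). So
`ω₂ = 2ω₁` kills every coefficient, while the coefficient at `β = 0` for `n = 2` is `2ω₁ − ω₂`.
-/

namespace Nat

theorem multinomial_eq_choose_mul_multinomial_erase {ι : Type*} [DecidableEq ι] {s : Finset ι}
    {a : ι} (ha : a ∈ s) (f : ι → ℕ) :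
    multinomial s f = (∑ i ∈ s, f i).choose (f a) * multinomial (s.erase a) f := by
  conv_lhs => rw [← insert_erase ha]
  rw [multinomial_insert (notMem_erase a s), add_sum_erase s f ha]

theorem multinomial_add_single_mul {ι : Type*} [DecidableEq ι] {s : Finset ι} {a : ι}
    (ha : a ∈ s) (f : ι → ℕ) :
    multinomial s (f + Pi.single a 1 : ι → ℕ) * (f a + 1) =
      (∑ i ∈ s, f i + 1) * multinomial s f := by
  have h_erase : multinomial (s.erase a) (f + Pi.single a 1 : ι → ℕ) = multinomial (s.erase a) f :=
    multinomial_congr fun i hi => by simp [ne_of_mem_erase hi]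
  have h_sum : ∑ i ∈ s, (f + Pi.single a 1 : ι → ℕ) i = ∑ i ∈ s, f i + 1 := by
    simp [sum_add_distrib, sum_pi_single', ha]
  rw [multinomial_eq_choose_mul_multinomial_erase ha,
    multinomial_eq_choose_mul_multinomial_erase ha, h_erase, h_sum, Pi.add_apply,
    Pi.single_eq_same, mul_right_comm, ← add_one_mul_choose_eq]
  ring

end Nat

namespace MvPolynomial

variable {σ R : Type*} [CommSemiring R]

theorem pderiv_pderiv_comm (i j : σ) (p : MvPolynomial σ R) :
    pderiv i (pderiv j p) = pderiv j (pderiv i p) := by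
  classical
  rcases eq_or_ne i j with rfl | hij
  · rfl
  ext m
  simp only [coeff_pderiv, add_right_comm m (Finsupp.single i 1), Finsupp.add_apply,
    Finsupp.single_apply, hij, hij.symm, if_false, add_zero]
  ring

theorem coeff_sum_X_mul_pderiv [Fintype σ] (p : MvPolynomial σ R) (m : σ →₀ ℕ) :
    coeff m (∑ j, X j * pderiv j p) = (∑ j, (m j : R)) * coeff m p := by
  classical
  simp only [coeff_sum, coeff_X_mul', coeff_pderiv, Finsupp.mem_support_iff, sum_mul]
  refine sum_congr rfl fun j _ => ?_
  split_ifs with hj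
  · have hj1 : 1 ≤ m j := Nat.one_le_iff_ne_zero.2 hj
    rw [tsub_add_cancel_of_le (Finsupp.single_le_iff.2 hj1), Finsupp.tsub_apply,
      Finsupp.single_eq_same, ← Nat.cast_add_one, Nat.sub_add_cancel hj1, mul_comm]
  · simp_all

end MvPolynomial

section PiSingle

variable {ι : Type*} [Fintype ι] [DecidableEq ι]

theorem sum_cast_add_single_mul (β : ι → ℕ) (a : ι) (c : ℕ) (ω : ι → ℝ) :
    ∑ i, ((β + Pi.single a c : ι → ℕ) i : ℝ) * ω i = ∑ i, (β i : ℝ) * ω i + c * ω a := by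
  simp [add_mul, sum_add_distrib, Pi.single_apply]

theorem sum_cast_add_single (β : ι → ℕ) (a : ι) (c : ℕ) :
    ∑ i, ((β + Pi.single a c : ι → ℕ) i : ℝ) = ∑ i, (β i : ℝ) + c := by
  simpa using sum_cast_add_single_mul β a c 1

end PiSingle

section WeightedIsobaric

variable {k : ℕ}

theorem mem_wipIndex {n : ℕ} {α : Fin k → ℕ} : α ∈ wipIndex k n ↔ isoDeg α = n := by
  refine ⟨fun h => (mem_filter.1 h).2, fun h => mem_filter.2 ⟨?_, h⟩⟩
  refine Fintype.mem_piFinset.2 fun i => mem_range.2 (Nat.lt_succ_of_le ?_)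
  calc α i ≤ (i.1 + 1) * α i := Nat.le_mul_of_pos_left _ i.1.succ_pos
    _ ≤ isoDeg α := single_le_sum (f := fun i => (i.1 + 1) * α i) (by simp) (mem_univ i)
    _ = n := h

theorem isoDeg_add_single (β : Fin k → ℕ) (a : Fin k) (c : ℕ) :
    isoDeg (β + Pi.single a c) = isoDeg β + (a.1 + 1) * c := by
  simp [isoDeg, mul_add, sum_add_distrib, Pi.single_apply]

theorem coeff_WIP (n : ℕ) (ω : Fin k → ℝ) (β : Fin k →₀ ℕ) :
    coeff β (WIP k n ω) = if isoDeg ⇑β = n then Aw ω β else 0 := by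
  simp only [WIP, coeff_sum, coeff_monomial, Equiv.symm_apply_eq (e := Finsupp.equivFunOnFinite)]
  rw [sum_ite_eq']
  exact if_congr mem_wipIndex rfl rfl

theorem Aw_add_single_mul (ω : Fin k → ℝ) (β : Fin k → ℕ) (a : Fin k) :
    Aw ω (β + Pi.single a 1) * (β a + 1) =
      Nat.multinomial univ β * (∑ i, (β i : ℝ) * ω i + ω a) := by
  have hM := congrArg (Nat.cast (R := ℝ)) (Nat.multinomial_add_single_mul (mem_univ a) β)
  push_cast at hM
  have hden : ∑ i, (β i : ℝ) + 1 ≠ 0 := by positivity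
  rw [Aw, sum_cast_add_single, sum_cast_add_single_mul]
  field_simp
  linear_combination (∑ i, (β i : ℝ) * ω i + ω a) * hM

theorem Aw_add_single_two_mul (ω : Fin k → ℝ) (β : Fin k → ℕ) (a : Fin k) :
    Aw ω (β + Pi.single a 2) * ((β a + 2) * (β a + 1)) =
      (∑ i, (β i : ℝ) + 1) * Nat.multinomial univ β * (∑ i, (β i : ℝ) * ω i + 2 * ω a) := by
  have hM := congrArg (Nat.cast (R := ℝ)) (Nat.multinomial_add_single_mul (mem_univ a) β)
  push_cast at hM
  have h := Aw_add_single_mul ω (β + Pi.single a 1) a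
  rw [add_assoc, ← Pi.single_add, sum_cast_add_single_mul] at h
  simp only [Pi.add_apply, Pi.single_eq_same, Nat.cast_add, Nat.cast_one] at h
  linear_combination (β a + 1) * h + (∑ i, (β i : ℝ) * ω i + 2 * ω a) * hM

theorem coeff_Tm (hk : 2 ≤ k) (m : ℝ) (P : MvPolynomial (Fin k) ℝ) (β : Fin k →₀ ℕ) :
    coeff β (Tm k hk m P) =
      coeff (β + Finsupp.single ⟨0, by omega⟩ 2) P
          * ((β ⟨0, by omega⟩ + 2) * (β ⟨0, by omega⟩ + 1))
        - coeff (β + Finsupp.single ⟨1, by omega⟩ 1) P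
          * ((∑ i, (β i : ℝ) + m) * (β ⟨1, by omega⟩ + 1)) := by
  have h_comm : ∑ j, X j * pderiv ⟨1, by omega⟩ (pderiv j P)
      = ∑ j, X j * pderiv j (pderiv (⟨1, by omega⟩ : Fin k) P) :=
    sum_congr rfl fun j _ => by rw [pderiv_pderiv_comm]
  rw [Tm, h_comm, coeff_sub, coeff_sub, coeff_sum_X_mul_pderiv, coeff_C_mul, coeff_pderiv,
    coeff_pderiv, coeff_pderiv, add_assoc, ← Finsupp.single_add]
  simp only [Finsupp.add_apply, Finsupp.single_eq_same, Nat.cast_add, Nat.cast_one]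
  ring

theorem coeff_Tm_one_WIP (hk : 2 ≤ k) (n : ℕ) (ω : Fin k → ℝ) (β : Fin k →₀ ℕ) :
    coeff β (Tm k hk 1 (WIP k n ω)) =
      if isoDeg ⇑β + 2 = n then
        (2 * ω ⟨0, by omega⟩ - ω ⟨1, by omega⟩) * ((∑ i, (β i : ℝ) + 1) * Nat.multinomial univ β)
      else 0 := by
  simp only [coeff_Tm, coeff_WIP, Finsupp.coe_add, Finsupp.single_eq_pi_single, isoDeg_add_single]
  split_ifs
  · linear_combination Aw_add_single_two_mul ω β ⟨0, by omega⟩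
      - (∑ i, (β i : ℝ) + 1) * Aw_add_single_mul ω β ⟨1, by omega⟩
  · simp

end WeightedIsobaric

/-- Corollary 4.2 (1): `T_1(P_{n,ω}) = 0` for all `n ≥ 1` iff `ω₂ = 2ω₁`. -/
theorem ker_T1_iff (k : ℕ) (hk : 2 ≤ k) (ω : Fin k → ℝ) :
    (∀ n, 1 ≤ n → Tm k hk 1 (WIP k n ω) = 0) ↔
      ω (⟨1, by omega⟩ : Fin k) = 2 * ω (⟨0, by omega⟩ : Fin k) := by
  constructor
  · intro h
    have h0 : 2 * ω ⟨0, by omega⟩ - ω ⟨1, by omega⟩ = 0 := by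
      simpa [h 2 one_le_two, isoDeg, (Nat.multinomial_pos _ _).ne'] using
        coeff_Tm_one_WIP hk 2 ω 0
    linarith
  · intro h n _
    ext β
    simp [coeff_Tm_one_WIP, h]
end
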